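/- For every permutation p of {1,…,n}, the first entry p_1 does not have two children in the minmax tree T^m_p. -/

import Mathlib

/-- Binary trees with natural-number labels, used to model minmax trees of
permutations. -/
inductive BTree where
  | nil : BTree
  | node : ℕ → BTree → BTree → BTree
deriving DecidableEq, Repr

namespace BTree

/-- The label of the root (if any). -/
def rootVal : BTree → Option ℕ
  | .nil => none
  | .node v _ _ => some v

/-- Whether the value `x` occurs as a label in the tree. -/
def memB : BTree → ℕ → Bool
  | .nil, _ => false
  | .node v l r, x => (x == v) || memB l x || memB r x

/-- The number of children of the (unique, for permutations) node labelled `x`. -/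
def numChildren : BTree → ℕ → ℕ
  | .nil, _ => 0
  | .node v l r, x =>
      if x = v then (if l = .nil then 0 else 1) + (if r = .nil then 0 else 1)
      else numChildren l x + numChildren r x

/-- `x` is a leaf of the tree: it occurs in the tree and has no children. -/
def IsLeaf (t : BTree) (x : ℕ) : Prop := t.memB x = true ∧ t.numChildren x = 0

instance (t : BTree) (x : ℕ) : Decidable (t.IsLeaf x) := by unfold IsLeaf; infer_instance

/-- `childB t x y = true` iff `x` is a child of `y` in `t`, i.e. `x` is the root of
the left or the right subtree hanging from `y`. -/
def childB : BTree → ℕ → ℕ → Bool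
  | .nil, _, _ => false
  | .node v l r, x, y =>
      ((y == v) && (l.rootVal == some x || r.rootVal == some x))
      || childB l x y || childB r x y

/-- `ancB t x y = true` iff `x` is a (strict) ancestor of `y` in `t`, i.e. `y` lies
in a subtree hanging from `x`. -/
def ancB : BTree → ℕ → ℕ → Bool
  | .nil, _, _ => false
  | .node v l r, x, y =>
      ((x == v) && (memB l y || memB r y)) || ancB l x y || ancB r x y

end BTree

/-- `x` is the leftmost-eligible extreme letter of `l`: the minimum or the maximum. -/
def isExtreme (l : List ℕ) (x : ℕ) : Bool :=
  (l.min? == some x) || (l.max? == some x)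

/-- Fuelled construction of the minmax tree of a list of distinct naturals:
split the list as `u ++ [m] ++ v` where `m` is the leftmost of the minimum and
maximum letters, put `m` at the root and recurse on `u` (left) and `v` (right). -/
def mmAux : ℕ → List ℕ → BTree
  | 0, _ => .nil
  | fuel+1, l =>
    if l.isEmpty then .nil
    else
      let k := l.findIdx (isExtreme l)
      .node (l.getD k 0) (mmAux fuel (l.take k)) (mmAux fuel (l.drop (k+1)))

/-- The minmax tree `T^m_p` of a word `l` (with distinct letters). -/
def minmaxTree (l : List ℕ) : BTree := mmAux l.length l

/-- The word `p_1 p_2 … p_n` on the letters `{1,…,n}` associated to a permutation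
`p` of `Fin n`. -/
def permList (n : ℕ) (p : Equiv.Perm (Fin n)) : List ℕ :=
  List.ofFn (fun i => (p i : ℕ) + 1)

/-- The `i`-th entry `p_i` (1-indexed) of the permutation `p`. -/
def entryAt (n : ℕ) (p : Equiv.Perm (Fin n)) (i : ℕ) : ℕ :=
  (permList n p).getD (i - 1) 0

/-
If `p_1` is the extreme letter chosen at the root, then the word to its left is empty,
so it has no left child. Otherwise `p_1` is the first letter of the left factor `u`, and since the
letters are distinct it does not occur in the right factor `v`; all of its children are then its
children in the minmax tree of `u`, and we conclude by induction.
-/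

namespace BTree

lemma numChildren_eq_zero_of_memB_eq_false {t : BTree} {x : ℕ} (h : t.memB x = false) :
    t.numChildren x = 0 := by
  induction t with
  | nil => rfl
  | node v l r ihl ihr =>
    simp only [memB, Bool.or_eq_false_iff, beq_eq_false_iff_ne] at h
    obtain ⟨⟨hxv, hl⟩, hr⟩ := h
    simp [numChildren, hxv, ihl hl, ihr hr]

lemma numChildren_node_nil_self_le_one (v : ℕ) (r : BTree) :
    (node v nil r).numChildren v ≤ 1 := by
  simp only [numChildren, if_true]
  split <;> omega

end BTree

lemma findIdx_isExtreme_lt_length {l : List ℕ} (hl : l ≠ []) :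
    l.findIdx (isExtreme l) < l.length := by
  obtain ⟨m, hm⟩ := Option.ne_none_iff_exists'.mp (mt List.min?_eq_none_iff.mp hl)
  exact List.findIdx_lt_length_of_exists ⟨m, List.min?_mem hm, by simp [isExtreme, hm]⟩

lemma mmAux_nil (f : ℕ) : mmAux f [] = .nil := by
  cases f <;> rfl

lemma mmAux_succ_of_ne_nil (f : ℕ) {l : List ℕ} (hl : l ≠ []) :
    mmAux (f + 1) l =
      .node (l.getD (l.findIdx (isExtreme l)) 0)
        (mmAux f (l.take (l.findIdx (isExtreme l))))
        (mmAux f (l.drop (l.findIdx (isExtreme l) + 1))) := by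
  simp [mmAux, hl]

lemma mem_of_memB_mmAux {f : ℕ} {l : List ℕ} {x : ℕ} (h : (mmAux f l).memB x = true) :
    x ∈ l := by
  induction f generalizing l with
  | zero => simp [mmAux, BTree.memB] at h
  | succ f ih =>
    rcases eq_or_ne l [] with rfl | hl
    · simp [mmAux_nil, BTree.memB] at h
    rw [mmAux_succ_of_ne_nil f hl] at h
    simp only [BTree.memB, Bool.or_eq_true, beq_iff_eq] at h
    rcases h with (rfl | h) | h
    · have hk := findIdx_isExtreme_lt_length hl
      rw [List.getD_eq_getElem _ _ hk]
      exact List.getElem_mem hk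
    · exact List.take_subset _ _ (ih h)
    · exact List.drop_subset _ _ (ih h)

lemma numChildren_mmAux_head_le_one (f : ℕ) {x : ℕ} {rest : List ℕ} (hnd : (x :: rest).Nodup) :
    (mmAux f (x :: rest)).numChildren x ≤ 1 := by
  induction f generalizing rest with
  | zero => simp [mmAux, BTree.numChildren]
  | succ f ih =>
    rw [mmAux_succ_of_ne_nil f (List.cons_ne_nil x rest)]
    set l := x :: rest
    obtain ⟨k, hk⟩ : ∃ k, l.findIdx (isExtreme l) = k := ⟨_, rfl⟩
    have hkl : k < l.length := hk ▸ findIdx_isExtreme_lt_length (List.cons_ne_nil x rest)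
    rw [hk]
    rcases k with _ | k
    · simpa [l, mmAux_nil] using BTree.numChildren_node_nil_self_le_one x _
    have hroot : l.getD (k + 1) 0 ≠ x := by
      rw [List.getD_eq_getElem _ _ hkl]
      intro h
      have : k + 1 = 0 := (hnd.getElem_inj_iff (hj := rest.length.succ_pos)).mp h
      omega
    have hleft : (mmAux f (l.take (k + 1))).numChildren x ≤ 1 :=
      ih (rest := rest.take k) ((List.take_sublist (k + 1) l).nodup hnd)
    have hright : (mmAux f (l.drop (k + 1 + 1))).numChildren x = 0 := by
      refine BTree.numChildren_eq_zero_of_memB_eq_false (Bool.eq_false_iff.mpr fun hmem => ?_)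
      exact (List.nodup_cons.mp hnd).1 (List.mem_of_mem_drop (mem_of_memB_mmAux hmem))
    simp only [BTree.numChildren, if_neg hroot.symm]
    omega

lemma permList_nodup (n : ℕ) (p : Equiv.Perm (Fin n)) : (permList n p).Nodup := by
  rw [permList, List.nodup_ofFn]
  intro a b hab
  exact p.injective (Fin.val_injective (by simpa using hab))

/-- For every permutation `p` of `{1,…,n}`, the first entry `p_1`
does not have two children in the minmax tree. -/
theorem first_entry_not_two_children (n : ℕ) (p : Equiv.Perm (Fin n)) :
    (minmaxTree (permList n p)).numChildren (entryAt n p 1) ≠ 2 := by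
  have hnd := permList_nodup n p
  unfold entryAt minmaxTree
  cases hpl : permList n p with
  | nil => simp [mmAux_nil, BTree.numChildren]
  | cons x rest =>
    have := numChildren_mmAux_head_le_one (x :: rest).length (hpl ▸ hnd)
    simp only [Nat.sub_self, List.getD_cons_zero]
    omega
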